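/- Let σ ∈ (−1, 0), let K ⊂ ℤ be a finite set, let m ∈ ℕ, and let K' := {k + j : k ∈ K, |j| ≤ 2m} ⊂ ℤ. Then there exists a nondecreasing function Λ : (0,∞) → (0,∞) such that: (a) Λ(s) ≤ Λ(r) (s/r)^{σ+1} for all s > r > 0; (b) Λ(r) is constant on each interval {r : log₂ r ∈ [k − 1, k + 1]} with k ∈ K'; (c) there exist constants 0 < c ≤ C depending only on σ, m and the cardinality of K such that c r^{σ+1} ≤ Λ(r) ≤ C r^{σ+1} for all r > 0. -/

import Mathlib

/-!
Write `Λ(r) = 2 ^ ((σ + 1) g(log₂ r))`, where `g(t) = t - |E ∩ (-∞, t]|` (this is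
`stoppedClock (volume.restrict E)`) and `E` is the union of the intervals `[k - 1, k + 1]`,
`k ∈ K'`. The clock `g` runs at unit speed off `E` and stops on `E`, so it is nondecreasing,
`1`-Lipschitz and constant on each of those intervals, and `t - |E| ≤ g(t) ≤ t`. These four
properties of `g` are, respectively, the monotonicity, the bound `Λ(s) ≤ Λ(r) (s/r)^{σ+1}`, the
flatness and the comparability `Λ(r) ≍ r^{σ+1}`; the comparability constant `2^{-(σ+1)|E|}`
depends only on `σ`, `m` and `#K` since `|E| ≤ 2 (4m + 1) #K`.
-/

open MeasureTheory Set Real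

lemma Int.finite_setOf_exists_abs_le_add (K : Finset ℤ) (N : ℤ) :
    {n : ℤ | ∃ k ∈ K, ∃ j : ℤ, |j| ≤ N ∧ n = k + j}.Finite := by
  refine (K.finite_toSet.image2 (· + ·) (finite_Icc (-N) N)).subset ?_
  rintro n ⟨k, hk, j, hj, rfl⟩
  exact ⟨k, hk, j, abs_le.mp hj, rfl⟩

noncomputable def stoppedClock (μ : Measure ℝ) (t : ℝ) : ℝ := t - μ.real (Iic t)

lemma stoppedClock_le (μ : Measure ℝ) (t : ℝ) : stoppedClock μ t ≤ t := by
  rw [stoppedClock]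
  linarith [measureReal_nonneg (μ := μ) (s := Iic t)]

section StoppedClock

variable {μ : Measure ℝ} [IsFiniteMeasure μ] {s t : ℝ}

lemma stoppedClock_sub_stoppedClock (hst : s ≤ t) :
    stoppedClock μ t - stoppedClock μ s = (t - s) - μ.real (Ioc s t) := by
  have hIoc : Iic t \ Iic s = Ioc s t := by ext; simp [and_comm]
  rw [← hIoc, measureReal_sdiff (Iic_subset_Iic.mpr hst) measurableSet_Iic,
    stoppedClock, stoppedClock]
  ring

lemma stoppedClock_sub_le (hst : s ≤ t) : stoppedClock μ t - stoppedClock μ s ≤ t - s := by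
  rw [stoppedClock_sub_stoppedClock hst]
  linarith [measureReal_nonneg (μ := μ) (s := Ioc s t)]

lemma monotone_stoppedClock (hμ : μ ≤ volume) : Monotone (stoppedClock μ) := by
  intro s t hst
  have hIoc : μ.real (Ioc s t) ≤ t - s := by
    rw [← volume_real_Ioc_of_le hst]
    exact ENNReal.toReal_mono (by simp) (hμ _)
  linarith [stoppedClock_sub_stoppedClock (μ := μ) hst]

lemma sub_measureReal_univ_le_stoppedClock : t - μ.real univ ≤ stoppedClock μ t := by
  rw [stoppedClock]
  linarith [measureReal_mono (μ := μ) (subset_univ (Iic t))]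

end StoppedClock

lemma stoppedClock_restrict_eq {E : Set ℝ} [IsFiniteMeasure (volume.restrict E)] {a b s t : ℝ}
    (hE : Icc a b ⊆ E) (hs : s ∈ Icc a b) (ht : t ∈ Icc a b) :
    stoppedClock (volume.restrict E) s = stoppedClock (volume.restrict E) t := by
  wlog hst : s ≤ t generalizing s t
  · exact (this ht hs (le_of_not_ge hst)).symm
  have hIoc : Ioc s t ∩ E = Ioc s t :=
    inter_eq_left.mpr fun x hx => hE ⟨hs.1.trans hx.1.le, hx.2.trans ht.2⟩
  have := stoppedClock_sub_stoppedClock (μ := volume.restrict E) hst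
  rw [measureReal_restrict_apply measurableSet_Ioc, hIoc, volume_real_Ioc_of_le hst] at this
  linarith

noncomputable def dyadicWeight (a : ℝ) (g : ℝ → ℝ) (r : ℝ) : ℝ := 2 ^ (a * g (logb 2 r))

section DyadicWeight

variable {a : ℝ} {g : ℝ → ℝ} {r s : ℝ}

lemma two_rpow_mul_logb (a : ℝ) (hr : 0 < r) : (2 : ℝ) ^ (a * logb 2 r) = r ^ a := by
  rw [mul_comm, rpow_mul zero_le_two, rpow_logb two_pos one_lt_two.ne' hr]

lemma dyadicWeight_pos : 0 < dyadicWeight a g r := rpow_pos_of_pos two_pos _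

lemma monotoneOn_dyadicWeight (ha : 0 ≤ a) (hg : Monotone g) :
    MonotoneOn (dyadicWeight a g) (Ioi 0) := fun _ hr _ _ hrs =>
  rpow_le_rpow_of_exponent_le one_le_two <|
    mul_le_mul_of_nonneg_left (hg (logb_le_logb_of_le one_lt_two hr hrs)) ha

lemma dyadicWeight_le_mul_rpow_div (ha : 0 ≤ a)
    (hg : ∀ s t, s ≤ t → g t - g s ≤ t - s) (hr : 0 < r) (hrs : r ≤ s) :
    dyadicWeight a g s ≤ dyadicWeight a g r * (s / r) ^ a := by
  have hs : 0 < s := hr.trans_le hrs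
  have hlog := hg _ _ (logb_le_logb_of_le one_lt_two hr hrs)
  rw [dyadicWeight, dyadicWeight, ← two_rpow_mul_logb a (div_pos hs hr),
    logb_div hs.ne' hr.ne', ← rpow_add two_pos]
  apply rpow_le_rpow_of_exponent_le one_le_two
  nlinarith

lemma dyadicWeight_le_rpow (ha : 0 ≤ a) (hg : ∀ t, g t ≤ t) (hr : 0 < r) :
    dyadicWeight a g r ≤ r ^ a := by
  rw [← two_rpow_mul_logb a hr]
  exact rpow_le_rpow_of_exponent_le one_le_two (mul_le_mul_of_nonneg_left (hg _) ha)

lemma two_rpow_neg_mul_rpow_le_dyadicWeight (ha : 0 ≤ a) {M : ℝ} (hg : ∀ t, t - M ≤ g t)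
    (hr : 0 < r) : 2 ^ (-(a * M)) * r ^ a ≤ dyadicWeight a g r := by
  rw [← two_rpow_mul_logb a hr, ← rpow_add two_pos]
  apply rpow_le_rpow_of_exponent_le one_le_two
  nlinarith [hg (logb 2 r)]

end DyadicWeight

/-- Construction of the multiplier weight `Λ`: nondecreasing, submultiplicatively
controlled by `r^{σ+1}`, flat on the dyadic blocks indexed by the enlarged
exceptional set `K'`, and comparable to `r^{σ+1}`. -/
theorem multiplier_weight_exists (σ : ℝ) (hσ : σ ∈ Set.Ioo (-1 : ℝ) 0)
    (K : Finset ℤ) (m : ℕ) (K' : Set ℤ)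
    (hK' : K' = {n : ℤ | ∃ k ∈ K, ∃ j : ℤ, |j| ≤ 2 * (m : ℤ) ∧ n = k + j}) :
    ∃ Λ : ℝ → ℝ,
      (∀ r, 0 < r → 0 < Λ r) ∧
      MonotoneOn Λ (Set.Ioi (0 : ℝ)) ∧
      (∀ r s : ℝ, 0 < r → r < s → Λ s ≤ Λ r * (s / r) ^ (σ + 1)) ∧
      (∀ k ∈ K', ∀ r s : ℝ, 0 < r → 0 < s →
        Real.logb 2 r ∈ Set.Icc ((k : ℝ) - 1) ((k : ℝ) + 1) →
        Real.logb 2 s ∈ Set.Icc ((k : ℝ) - 1) ((k : ℝ) + 1) → Λ r = Λ s) ∧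
      ∃ c C : ℝ, 0 < c ∧ c ≤ C ∧
        ∀ r : ℝ, 0 < r → c * r ^ (σ + 1) ≤ Λ r ∧ Λ r ≤ C * r ^ (σ + 1) := by
  have ha : 0 ≤ σ + 1 := by linarith [hσ.1]
  set E : Set ℝ := ⋃ k ∈ K', Icc ((k : ℝ) - 1) (k + 1)
  have hE : volume E ≠ ⊤ :=
    (measure_biUnion_lt_top (hK' ▸ Int.finite_setOf_exists_abs_le_add K _) fun _ _ => by simp).ne
  have := isFiniteMeasure_restrict.mpr hE
  set μ := volume.restrict E
  refine ⟨dyadicWeight (σ + 1) (stoppedClock μ), fun _ _ => dyadicWeight_pos, ?_, ?_, ?_, ?_⟩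
  · exact monotoneOn_dyadicWeight ha (monotone_stoppedClock Measure.restrict_le_self)
  · exact fun r s hr hrs =>
      dyadicWeight_le_mul_rpow_div ha (fun _ _ => stoppedClock_sub_le) hr hrs.le
  · intro k hk r s _ _ hr hs
    have hkE : Icc ((k : ℝ) - 1) (k + 1) ⊆ E :=
      subset_biUnion_of_mem (u := fun k : ℤ => Icc ((k : ℝ) - 1) (k + 1)) hk
    exact congrArg (fun x => (2 : ℝ) ^ ((σ + 1) * x)) (stoppedClock_restrict_eq hkE hr hs)
  · refine ⟨2 ^ (-((σ + 1) * μ.real univ)), 1, by positivity, ?_, fun r hr => ⟨?_, ?_⟩⟩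
    · exact rpow_le_one_of_one_le_of_nonpos one_le_two
        (neg_nonpos.mpr (mul_nonneg ha measureReal_nonneg))
    · exact two_rpow_neg_mul_rpow_le_dyadicWeight ha
        (fun _ => sub_measureReal_univ_le_stoppedClock) hr
    · simpa using dyadicWeight_le_rpow ha (stoppedClock_le μ) hr
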